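/- Let C: y² = g(x) be a genus 3 hyperelliptic curve with g separable of degree 8, f(x) = g(x)^{1/2} a branch of the square root holomorphic near a non-root w of g, and P a point of C over w. Let N = min{n ∈ ℕ : n ≥ 5, f^(n)(w) ≠ 0}. Then the 2-Weierstrass weight of P is N − 5. In particular, P is a 2-Weierstrass point if and only if f^(5)(w) = 0. -/

import Mathlib

open Polynomial

lemma aux_iteratedDeriv_polysum (c : ℕ → ℂ) (w : ℂ) (k : ℕ) :
    iteratedDeriv k (fun x => ∑ n ∈ Finset.range 5, c n * (x - w) ^ n) =
      fun x => ∑ n ∈ Finset.range 5, c n * (n.descFactorial k : ℂ) * (x - w) ^ (n - k) := by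
  induction k with
  | zero => simp
  | succ k ih =>
    rw [iteratedDeriv_succ, ih]
    funext x
    have h : ∀ n ∈ Finset.range 5, HasDerivAt
        (fun x => c n * (n.descFactorial k : ℂ) * (x - w) ^ (n - k))
        (c n * (n.descFactorial (k + 1) : ℂ) * (x - w) ^ (n - (k + 1))) x := by
      intro n _
      have h1 : HasDerivAt (fun x : ℂ => x - w) 1 x := (hasDerivAt_id x).sub_const w
      have h2 := (h1.pow (n - k)).const_mul (c n * (n.descFactorial k : ℂ))
      refine h2.congr_deriv ?_
      rw [Nat.descFactorial_succ, ← Nat.sub_sub]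
      push_cast
      ring
    exact (HasDerivAt.sum h).deriv

lemma aux_polysum_deriv_at (c : ℕ → ℂ) (w : ℂ) (k : ℕ) :
    iteratedDeriv k (fun x => ∑ n ∈ Finset.range 5, c n * (x - w) ^ n) w =
      if k < 5 then c k * (k.factorial : ℂ) else 0 := by
  rw [aux_iteratedDeriv_polysum]
  simp only [sub_self]
  by_cases hk : k < 5
  · rw [if_pos hk, Finset.sum_eq_single k]
    · simp [Nat.descFactorial_self]
    · intro n hn hne
      rcases lt_or_gt_of_ne hne with h | h
      · simp [Nat.descFactorial_eq_zero_iff_lt.mpr h]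
      · rw [zero_pow (Nat.sub_ne_zero_of_lt h), mul_zero]
    · intro hcon; exact absurd (Finset.mem_range.mpr hk) hcon
  · rw [if_neg hk]
    apply Finset.sum_eq_zero
    intro n hn
    have : n < k := lt_of_lt_of_le (Finset.mem_range.mp hn) (le_of_not_gt hk)
    simp [Nat.descFactorial_eq_zero_iff_lt.mpr this]

lemma aux_iteratedDeriv_sub {n : ℕ} {f g : ℂ → ℂ} {x : ℂ}
    (hf : ContDiffAt ℂ n f x) (hg : ContDiffAt ℂ n g x) :
    iteratedDeriv n (f - g) x = iteratedDeriv n f x - iteratedDeriv n g x := by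
  obtain ⟨s, hso, hxs, hfs, hgs⟩ : ∃ s, IsOpen s ∧ x ∈ s ∧ ContDiffOn ℂ n f s ∧
      ContDiffOn ℂ n g s := by
    have h1 := hf.eventually (by simp)
    have h2 := hg.eventually (by simp)
    obtain ⟨s, hs, hso, hxs⟩ := eventually_nhds_iff.mp (h1.and h2)
    exact ⟨s, hso, hxs, fun y hy => (hs y hy).1.contDiffWithinAt,
      fun y hy => (hs y hy).2.contDiffWithinAt⟩
  have e : ∀ h : ℂ → ℂ, iteratedDerivWithin n h s x = iteratedDeriv n h x := by
    intro h
    rw [iteratedDerivWithin_eq_iteratedFDerivWithin, iteratedDeriv_eq_iteratedFDeriv,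
      iteratedFDerivWithin_of_isOpen n hso hxs]
  rw [← e, ← e, ← e, iteratedDerivWithin_sub hxs hso.uniqueDiffOn (hfs x hxs) (hgs x hxs)]

lemma aux_coeff_fps {f : ℂ → ℂ} {p : FormalMultilinearSeries ℂ ℂ ℂ} {w : ℂ}
    (hp : HasFPowerSeriesAt f p w) (n : ℕ) :
    p.coeff n = iteratedDeriv n f w / (n.factorial : ℂ) := by
  obtain ⟨r, hr⟩ := hp
  have h := hr.factorial_smul (1 : ℂ) n
  rw [iteratedDeriv_eq_iteratedFDeriv, ← h, FormalMultilinearSeries.coeff]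
  rw [nsmul_eq_mul]
  field_simp [Nat.factorial_ne_zero]
  rfl

/-- Let `C : y² = g(x)` be a genus-3 hyperelliptic curve with `g` separable of degree 8,
`w` a non-root of `g`, and `f` a branch of `√g` holomorphic near `w`. Let
`N = min {n ∈ ℕ : n ≥ 5, f⁽ⁿ⁾(w) ≠ 0}`. The 2-Weierstrass weight of a point `P` of `C`
over `w` is `n₆ − 6`, where `n₆ − 1` is the order of vanishing at `w` of
`T(x) = f(x) − f_{w,4}(x)` (`f_{w,4}` the degree-4 Taylor polynomial of `f` at `w`).
Then this order equals `N`, so the 2-weight of `P` is `N − 5`; in particular `P` is a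
2-Weierstrass point (positive weight, i.e. `N > 5`) if and only if `f⁽⁵⁾(w) = 0`. -/
theorem two_weierstrass_weight_of_nonbranch_point
    (g : Polynomial ℂ) (hg : g.Separable) (hdeg : g.natDegree = 8)
    (w : ℂ) (hw : g.eval w ≠ 0)
    (f : ℂ → ℂ) (hf : AnalyticAt ℂ f w)
    (hsq : ∀ᶠ x in nhds w, (f x) ^ 2 = g.eval x)
    (N : ℕ) (hN : IsLeast {n : ℕ | 5 ≤ n ∧ iteratedDeriv n f w ≠ 0} N)
    (T : ℂ → ℂ)
    (hT : T = fun x => f x - ∑ n ∈ Finset.range 5,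
      (iteratedDeriv n f w / (n.factorial : ℂ)) * (x - w) ^ n)
    (hTa : AnalyticAt ℂ T w) :
    analyticOrderAt T w = (N : ℕ∞) ∧ ((N : ℕ∞) - 5 > 0 ↔ iteratedDeriv 5 f w = 0) := by
  obtain ⟨⟨hN5, hNne⟩, hNle⟩ := hN
  set c : ℕ → ℂ := fun n => iteratedDeriv n f w / (n.factorial : ℂ) with hc
  set Q : ℂ → ℂ := fun x => ∑ n ∈ Finset.range 5, c n * (x - w) ^ n with hQ
  have hQcd : ∀ m : ℕ, ContDiffAt ℂ m Q w := by
    intro m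
    apply ContDiffAt.sum
    intro i _
    exact (contDiffAt_const.mul (((contDiffAt_id.sub contDiffAt_const)).pow i))
  have hTfQ : T = f - Q := by rw [hT]; rfl
  have hTderiv : ∀ k : ℕ, iteratedDeriv k T w =
      if k < 5 then 0 else iteratedDeriv k f w := by
    intro k
    rw [hTfQ, aux_iteratedDeriv_sub hf.contDiffAt (hQcd k), hQ, aux_polysum_deriv_at]
    by_cases hk : k < 5
    · rw [if_pos hk, if_pos hk, hc]
      simp only []
      rw [div_mul_cancel₀ _ (Nat.cast_ne_zero.mpr k.factorial_ne_zero), sub_self]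
    · rw [if_neg hk, if_neg hk, sub_zero]
  obtain ⟨q, hq⟩ := hTa
  have hqc : ∀ k : ℕ, q.coeff k = iteratedDeriv k T w / (k.factorial : ℂ) :=
    aux_coeff_fps hq
  have hqN : q.coeff N ≠ 0 := by
    rw [hqc, hTderiv, if_neg (by omega)]
    exact div_ne_zero hNne (Nat.cast_ne_zero.mpr N.factorial_ne_zero)
  have hqlt : ∀ k < N, q.coeff k = 0 := by
    intro k hk
    rw [hqc, hTderiv]
    by_cases h5 : k < 5
    · rw [if_pos h5, zero_div]
    · rw [if_neg h5]
      have : iteratedDeriv k f w = 0 := by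
        by_contra hne
        exact absurd (hNle ⟨by omega, hne⟩) (by omega)
      rw [this, zero_div]
  have hqne : q ≠ 0 := by
    intro h
    apply hqN
    rw [h]
    simp [FormalMultilinearSeries.coeff]
  have horder : q.order = N := by
    rcases lt_trichotomy q.order N with h | h | h
    · have h0 := hqlt q.order h
      rw [FormalMultilinearSeries.coeff_eq_zero] at h0
      exact absurd h0 (q.apply_order_ne_zero hqne)
    · exact h
    · have h0 := q.apply_eq_zero_of_lt_order h
      rw [← FormalMultilinearSeries.coeff_eq_zero] at h0
      exact absurd h0 hqN
  constructor
  · rw [← horder, AnalyticAt.analyticOrderAt_eq_natCast ⟨q, hq⟩]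
    exact ⟨_, ⟨_, hq.has_fpower_series_iterate_dslope_fslope q.order⟩,
      hq.iterate_dslope_fslope_ne_zero hqne,
      Filter.Eventually.of_forall hq.eq_pow_order_mul_iterate_dslope⟩
  · constructor
    · intro hpos
      by_contra h5
      have : N ≤ 5 := hNle ⟨le_refl 5, h5⟩
      have hN5' : N = 5 := le_antisymm this hN5
      rw [hN5'] at hpos
      simp at hpos
    · intro h5
      have hN5' : 5 < N := by
        rcases lt_or_eq_of_le hN5 with h | h
        · exact h
        · exact absurd h5 (h ▸ hNne)
      have : ((5 : ℕ) : ℕ∞) < (N : ℕ∞) := by exact_mod_cast hN5'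
      simpa using tsub_pos_of_lt this
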